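/- Suppose R contains ℚ (R is a ℚ-algebra). Then there exists exactly one R-linear map λ₀ : R[X_1,…,X_N] → R such that λ₀(M_{jk}(p)) = 0 for all pairs of distinct indices j, k ∈ {1,…,N} and all p ∈ R[X_1,…,X_N], and λ₀((X·X)^n) = 1 for every integer n ≥ 0. -/

import Mathlib

open MvPolynomial

/-- The rotation generator `M_{jk} p = X_j ∂_k p − X_k ∂_j p`. -/
noncomputable def rot {R : Type*} [CommRing R] {N : ℕ} (j k : Fin N)
    (p : MvPolynomial (Fin N) R) : MvPolynomial (Fin N) R :=
  X j * pderiv k p - X k * pderiv j p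

/-- The Laplacian `Δ p = Σ_j ∂_j² p`. -/
noncomputable def lap {R : Type*} [CommRing R] {N : ℕ}
    (p : MvPolynomial (Fin N) R) : MvPolynomial (Fin N) R :=
  ∑ j, pderiv j (pderiv j p)

/-- The polynomial `X·X = X_1² + ⋯ + X_N²`. -/
noncomputable def XX (R : Type*) [CommRing R] (N : ℕ) : MvPolynomial (Fin N) R :=
  ∑ j, X j ^ 2

/-!
Existence: on homogeneous polynomials of degree `e` put
`λ₀ p = coeff₀ (Δ^(e/2) p) / c_(e/2)`, where `Δ^m (X·X)^m = c_m = ∏_{t<m} 2(t+1)(N+2t)`.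
The Laplacian commutes with every `M_{jk}`, and `M_{jk} q` has no constant term, so `λ₀` kills
the image of each `M_{jk}`.

Uniqueness rests on the Casimir identity
`∑_{j,k} M_{jk}² = 2 (X·X Δ - E² - (N-2) E)`, with `E = ∑ X_i ∂_i` the Euler operator.
For a rotation-invariant functional `μ` and `p` of degree `e` it gives
`e (e+N-2) μ(p) = μ(X·X Δp)`. As `q ↦ μ(X·X q)` is again rotation-invariant, induction on the
degree shows that `μ` vanishes as soon as it vanishes on all powers of `X·X`.
-/

namespace MvPolynomial

variable {R σ : Type*} [CommRing R]

theorem pderiv_pderiv_comm (i j : σ) (p : MvPolynomial σ R) :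
    pderiv i (pderiv j p) = pderiv j (pderiv i p) := by
  classical
  induction p using MvPolynomial.induction_on with
  | C a => simp
  | add p q hp hq => simp [hp, hq]
  | mul_X p l ih =>
    simp only [pderiv_mul, pderiv_X, map_add, ih]
    by_cases hil : i = l <;> by_cases hjl : j = l <;> simp [hil, hjl]

theorem pderiv_X_mul [DecidableEq σ] (i j : σ) (f : MvPolynomial σ R) :
    pderiv i (X j * f) = (if i = j then f else 0) + X j * pderiv i f := by
  rw [pderiv_mul, pderiv_X]
  by_cases h : i = j
  · subst h; simp
  · simp [h, Ne.symm h]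

variable [Fintype σ]

noncomputable def euler (p : MvPolynomial σ R) : MvPolynomial σ R :=
  ∑ i, X i * pderiv i p

theorem euler_nsmul (n : ℕ) (p : MvPolynomial σ R) : euler (n • p) = n • euler p := by
  simp only [euler, map_nsmul, mul_smul_comm, Finset.smul_sum]

theorem IsHomogeneous.euler {p : MvPolynomial σ R} {e : ℕ} (hp : p.IsHomogeneous e) :
    euler p = e • p :=
  hp.sum_X_mul_pderiv

theorem sum_pderiv_X_mul (j : σ) (f : σ → MvPolynomial σ R) :
    ∑ k, pderiv k (X j * f k) = f j + X j * ∑ k, pderiv k (f k) := by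
  classical
  simp only [pderiv_X_mul, Finset.sum_add_distrib, Finset.sum_ite_eq', Finset.mem_univ, if_true,
    Finset.mul_sum]

theorem sum_pderiv_X_mul_self (f : MvPolynomial σ R) :
    ∑ k, pderiv k (X k * f) = Fintype.card σ • f + euler f := by
  classical
  simp only [pderiv_X_mul, Finset.sum_add_distrib, if_true, Finset.sum_const, Finset.card_univ,
    euler]

theorem pderiv_euler (j : σ) (p : MvPolynomial σ R) :
    pderiv j (euler p) = pderiv j p + euler (pderiv j p) := by
  classical
  simp only [euler, map_sum, pderiv_X_mul, Finset.sum_add_distrib, Finset.sum_ite_eq,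
    Finset.mem_univ, if_true, pderiv_pderiv_comm j]

theorem euler_euler (p : MvPolynomial σ R) :
    euler (euler p) = euler p + ∑ i, X i * euler (pderiv i p) := by
  conv_lhs => rw [euler]
  simp only [pderiv_euler, mul_add, Finset.sum_add_distrib]
  rfl

end MvPolynomial

theorem isUnit_natCast_of_ne_zero {R : Type*} [Ring R] [Algebra ℚ R] {n : ℕ} (hn : n ≠ 0) :
    IsUnit (n : R) := by
  simpa using (IsUnit.mk0 (n : ℚ) (Nat.cast_ne_zero.mpr hn)).map (algebraMap ℚ R)

section Rotations

variable {R : Type*} [CommRing R] {N : ℕ}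

theorem rot_self (j : Fin N) (p : MvPolynomial (Fin N) R) : rot j j p = 0 :=
  sub_self _

theorem rot_add (j k : Fin N) (p q : MvPolynomial (Fin N) R) :
    rot j k (p + q) = rot j k p + rot j k q := by
  simp only [rot, map_add]
  ring

theorem pderiv_XX (i : Fin N) : pderiv i (XX R N) = 2 * X i := by
  classical
  simp only [XX, map_sum, pderiv_pow, pderiv_X, Pi.single_apply, mul_ite, mul_one, mul_zero]
  norm_num

theorem rot_XX_mul (j k : Fin N) (q : MvPolynomial (Fin N) R) :
    rot j k (XX R N * q) = XX R N * rot j k q := by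
  simp only [rot, pderiv_mul, pderiv_XX]
  ring

theorem isHomogeneous_XX : (XX R N).IsHomogeneous 2 :=
  IsHomogeneous.sum _ _ _ fun j _ => isHomogeneous_X_pow j 2

theorem isHomogeneous_rot {p : MvPolynomial (Fin N) R} {e : ℕ} (hp : p.IsHomogeneous e)
    (j k : Fin N) : (rot j k p).IsHomogeneous e := by
  cases e with
  | zero =>
    rw [totalDegree_eq_zero_iff_eq_C.mp (Nat.le_zero.mp hp.totalDegree_le)]
    simpa [rot] using isHomogeneous_zero (Fin N) R 0
  | succ e =>
    have h (i l : Fin N) : (X i * pderiv l p).IsHomogeneous (e + 1) := by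
      simpa [add_comm] using (isHomogeneous_X R i).mul (hp.pderiv (i := l))
    exact (h j k).sub (h k j)

theorem isHomogeneous_lap {p : MvPolynomial (Fin N) R} {e : ℕ} (hp : p.IsHomogeneous e) :
    (lap p).IsHomogeneous (e - 2) :=
  IsHomogeneous.sum _ _ _ fun _ _ => by simpa [Nat.sub_sub] using hp.pderiv.pderiv

theorem coeff_zero_rot (j k : Fin N) (p : MvPolynomial (Fin N) R) : coeff 0 (rot j k p) = 0 := by
  simp [← constantCoeff_eq, rot]

end Rotations

section Casimir

variable {R : Type*} [CommRing R] {N : ℕ}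

theorem sum_rot_rot (p : MvPolynomial (Fin N) R) :
    ∑ j, ∑ k, rot j k (rot j k p) =
      2 * (XX R N * lap p - euler (euler p) - (N - 2) * euler p) := by
  have hsymm : ∑ j, ∑ k, rot j k (rot j k p) =
      2 * ∑ j, ∑ k, (X j * pderiv k (X j * pderiv k p) - X j * pderiv k (X k * pderiv j p)) := by
    simp only [rot, map_sub, mul_sub, Finset.sum_sub_distrib]
    rw [Finset.sum_comm (f := fun j k => X k * pderiv j (X k * pderiv j p)),
      Finset.sum_comm (f := fun j k => X k * pderiv j (X j * pderiv k p))]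
    ring
  have h1 : ∑ j, ∑ k, X j * pderiv k (X j * pderiv k p) = euler p + XX R N * lap p := by
    simp only [← Finset.mul_sum, sum_pderiv_X_mul, mul_add, Finset.sum_add_distrib, ← mul_assoc,
      ← Finset.sum_mul, euler, lap, XX, sq]
  have h2 : ∑ j, ∑ k, X j * pderiv k (X k * pderiv j p) =
      N • euler p + euler (euler p) - euler p := by
    simp only [← Finset.mul_sum, sum_pderiv_X_mul_self, Fintype.card_fin, mul_add,
      Finset.sum_add_distrib, mul_smul_comm, ← Finset.smul_sum, euler_euler]
    simp only [euler]
    abel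
  rw [hsymm, Finset.sum_congr rfl fun j _ => Finset.sum_sub_distrib .., Finset.sum_sub_distrib,
    h1, h2, nsmul_eq_mul]
  ring

theorem sum_rot_rot_of_isHomogeneous {p : MvPolynomial (Fin N) R} {e : ℕ}
    (hp : p.IsHomogeneous e) :
    ∑ j, ∑ k, rot j k (rot j k p) = (2 : R) • (XX R N * lap p - ((e : R) * (e + N - 2)) • p) := by
  rw [sum_rot_rot, hp.euler, euler_nsmul, hp.euler, smul_smul, smul_eq_C_mul, smul_eq_C_mul,
    nsmul_eq_mul, nsmul_eq_mul]
  simp only [map_mul, map_sub, map_add, map_natCast, map_ofNat]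
  push_cast
  ring

end Casimir

section Uniqueness

variable {R : Type*} [CommRing R] {N : ℕ}

def IsRotationInvariant (μ : MvPolynomial (Fin N) R →ₗ[R] R) : Prop :=
  ∀ j k : Fin N, j ≠ k → ∀ p, μ (rot j k p) = 0

namespace IsRotationInvariant

variable {μ : MvPolynomial (Fin N) R →ₗ[R] R}

theorem map_rot (hμ : IsRotationInvariant μ) (j k : Fin N) (p : MvPolynomial (Fin N) R) :
    μ (rot j k p) = 0 := by
  obtain rfl | hjk := eq_or_ne j k
  · rw [rot_self, map_zero]
  · exact hμ j k hjk p

theorem sub {ν : MvPolynomial (Fin N) R →ₗ[R] R} (hμ : IsRotationInvariant μ)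
    (hν : IsRotationInvariant ν) : IsRotationInvariant (μ - ν) := fun j k hjk p => by
  rw [LinearMap.sub_apply, hμ j k hjk, hν j k hjk, sub_zero]

theorem comp_mulLeft_XX (hμ : IsRotationInvariant μ) :
    IsRotationInvariant (μ ∘ₗ LinearMap.mulLeft R (XX R N)) := fun j k hjk p => by
  simp only [LinearMap.comp_apply, LinearMap.mulLeft_apply, ← rot_XX_mul, hμ j k hjk]

theorem map_XX_mul_lap [Algebra ℚ R] (hμ : IsRotationInvariant μ)
    {p : MvPolynomial (Fin N) R} {e : ℕ} (hp : p.IsHomogeneous e) :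
    μ (XX R N * lap p) = (e : R) * (e + N - 2) * μ p := by
  have h := congrArg μ (sum_rot_rot_of_isHomogeneous hp)
  simp only [map_sum, hμ.map_rot, Finset.sum_const_zero, map_sub, map_smul, smul_eq_mul] at h
  rw [← sub_eq_zero, ← (isUnit_natCast_of_ne_zero (R := R) two_ne_zero).mul_right_eq_zero]
  exact_mod_cast h.symm

theorem eq_zero_of_isHomogeneous [Algebra ℚ R] (hN : 2 ≤ N) (hμ : IsRotationInvariant μ)
    (hXX : ∀ n, μ (XX R N ^ n) = 0) {p : MvPolynomial (Fin N) R} {e : ℕ}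
    (hp : p.IsHomogeneous e) : μ p = 0 := by
  induction e using Nat.strong_induction_on generalizing μ p with
  | _ e ih =>
    obtain rfl | he := eq_or_ne e 0
    · rw [totalDegree_eq_zero_iff_eq_C.mp (Nat.le_zero.mp hp.totalDegree_le), ← mul_one (C _),
        ← smul_eq_C_mul, map_smul, ← pow_zero (XX R N), hXX, smul_zero]
    have hlap : μ (XX R N * lap p) = 0 :=
      ih (e - 2) (by omega) hμ.comp_mulLeft_XX
        (fun n => by simpa [← pow_succ'] using hXX (n + 1)) (isHomogeneous_lap hp)
    have hunit : IsUnit ((e : R) * (e + N - 2)) := by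
      have := isUnit_natCast_of_ne_zero (R := R) (n := e * (e + N - 2))
        (Nat.mul_ne_zero he (by omega))
      rwa [Nat.cast_mul, Nat.cast_sub (by omega), Nat.cast_add, Nat.cast_ofNat] at this
    rw [hμ.map_XX_mul_lap hp] at hlap
    exact hunit.mul_right_eq_zero.mp hlap

theorem eq_zero [Algebra ℚ R] (hN : 2 ≤ N) (hμ : IsRotationInvariant μ)
    (hXX : ∀ n, μ (XX R N ^ n) = 0) : μ = 0 := by
  refine LinearMap.ext fun p => ?_
  rw [LinearMap.zero_apply, ← sum_homogeneousComponent p, map_sum]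
  exact Finset.sum_eq_zero fun i _ =>
    hμ.eq_zero_of_isHomogeneous hN hXX (homogeneousComponent_isHomogeneous i p)

end IsRotationInvariant

end Uniqueness

section Existence

variable {R : Type*} [CommRing R] {N : ℕ}

noncomputable def lapₗ : Module.End R (MvPolynomial (Fin N) R) :=
  ∑ j, (pderiv j).toLinearMap ∘ₗ (pderiv j).toLinearMap

theorem lapₗ_apply (p : MvPolynomial (Fin N) R) : lapₗ p = lap p := by
  simp [lapₗ, lap, LinearMap.sum_apply]

theorem lap_sub (p q : MvPolynomial (Fin N) R) : lap (p - q) = lap p - lap q := by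
  simp only [← lapₗ_apply, map_sub]

theorem lap_X_mul (j : Fin N) (q : MvPolynomial (Fin N) R) :
    lap (X j * q) = 2 * pderiv j q + X j * lap q := by
  classical
  simp only [lap, pderiv_X_mul, map_add, apply_ite (pderiv _), map_zero, Finset.sum_add_distrib,
    Finset.sum_ite_eq', Finset.mem_univ, if_true, Finset.mul_sum]
  ring

theorem lap_pderiv (k : Fin N) (p : MvPolynomial (Fin N) R) :
    lap (pderiv k p) = pderiv k (lap p) := by
  simp only [lap, map_sum, pderiv_pderiv_comm k]

theorem lap_rot (j k : Fin N) (p : MvPolynomial (Fin N) R) :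
    lap (rot j k p) = rot j k (lap p) := by
  simp only [rot, lap_sub, lap_X_mul, lap_pderiv, pderiv_pderiv_comm j k]
  ring

theorem lap_XX_pow_succ (m : ℕ) :
    lap (XX R N ^ (m + 1)) = (2 * (m + 1) * (N + 2 * m)) • XX R N ^ m := by
  have h (i : Fin N) : pderiv i (XX R N ^ (m + 1)) = (2 * (m + 1)) • (X i * XX R N ^ m) := by
    rw [pderiv_pow, pderiv_XX, nsmul_eq_mul]
    push_cast
    ring
  simp only [lap, h, map_nsmul, ← Finset.smul_sum, sum_pderiv_X_mul_self, Fintype.card_fin,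
    (isHomogeneous_XX.pow m).euler, ← add_nsmul, smul_smul]

def sphereNormalizer (N m : ℕ) : ℕ :=
  ∏ t ∈ Finset.range m, 2 * (t + 1) * (N + 2 * t)

theorem sphereNormalizer_ne_zero (hN : 0 < N) (m : ℕ) : sphereNormalizer N m ≠ 0 :=
  Finset.prod_ne_zero_iff.mpr fun t _ => by positivity

theorem sphereNormalizer_succ (N m : ℕ) :
    sphereNormalizer N (m + 1) = sphereNormalizer N m * (2 * (m + 1) * (N + 2 * m)) :=
  Finset.prod_range_succ _ m

theorem lapₗ_pow_XX_pow (m : ℕ) :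
    (lapₗ ^ m) (XX R N ^ m) = C (sphereNormalizer N m : R) := by
  induction m with
  | zero => simp [sphereNormalizer]
  | succ m ih =>
    rw [pow_succ, Module.End.mul_apply, lapₗ_apply, lap_XX_pow_succ, map_nsmul, ih,
      sphereNormalizer_succ, nsmul_eq_mul, ← map_natCast (C : R →+* _), ← map_mul, ← Nat.cast_mul,
      mul_comm]

theorem lapₗ_pow_rot (m : ℕ) (j k : Fin N) (p : MvPolynomial (Fin N) R) :
    (lapₗ ^ m) (rot j k p) = rot j k ((lapₗ ^ m) p) := by
  have h : Function.Commute lapₗ (rot (R := R) j k) := fun q => by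
    rw [lapₗ_apply, lapₗ_apply, lap_rot]
  rw [Module.End.pow_apply, Module.End.pow_apply, (h.iterate_left m).eq]

-- `Ring.inverse` is junk (zero) on non-units; the normalizer is a unit in a ℚ-algebra when `N > 0`.
noncomputable def sphericalMeanDeg (m : ℕ) : MvPolynomial (Fin N) R →ₗ[R] R :=
  Ring.inverse (sphereNormalizer N m : R) • (lcoeff R 0 ∘ₗ lapₗ ^ m)

noncomputable def sphericalMean : MvPolynomial (Fin N) R →ₗ[R] R :=
  (basisMonomials (Fin N) R).constr R fun d => sphericalMeanDeg (d.degree / 2) (monomial d 1)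

theorem sphericalMean_monomial (d : Fin N →₀ ℕ) :
    sphericalMean (monomial d (1 : R)) = sphericalMeanDeg (d.degree / 2) (monomial d 1) :=
  (basisMonomials (Fin N) R).constr_basis R _ d

theorem sphericalMean_of_isHomogeneous {p : MvPolynomial (Fin N) R} {e : ℕ}
    (hp : p.IsHomogeneous e) : sphericalMean p = sphericalMeanDeg (e / 2) p := by
  conv_lhs => rw [p.as_sum]
  conv_rhs => rw [p.as_sum]
  simp only [map_sum]
  refine Finset.sum_congr rfl fun d hd => ?_
  have hdeg : d.degree = e := by
    by_contra h
    exact mem_support_iff.mp hd (hp.coeff_eq_zero h)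
  rw [← mul_one (coeff d p), ← smul_eq_mul, ← smul_monomial, map_smul, map_smul,
    sphericalMean_monomial, hdeg]

theorem sphericalMean_rot (j k : Fin N) (p : MvPolynomial (Fin N) R) :
    sphericalMean (rot j k p) = 0 := by
  induction p using MvPolynomial.induction_on' with
  | monomial d r =>
    rw [sphericalMean_of_isHomogeneous (isHomogeneous_rot (isHomogeneous_monomial r rfl) j k)]
    simp [sphericalMeanDeg, lapₗ_pow_rot, coeff_zero_rot]
  | add p q hp hq => rw [rot_add, map_add, hp, hq, add_zero]

theorem sphericalMean_XX_pow [Algebra ℚ R] (hN : 0 < N) (n : ℕ) :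
    sphericalMean (XX R N ^ n) = 1 := by
  rw [sphericalMean_of_isHomogeneous (isHomogeneous_XX.pow n), Nat.mul_div_cancel_left n two_pos,
    sphericalMeanDeg, LinearMap.smul_apply, LinearMap.comp_apply, lapₗ_pow_XX_pow, lcoeff_apply,
    coeff_zero_C, smul_eq_mul,
    Ring.inverse_mul_cancel _ (isUnit_natCast_of_ne_zero (sphereNormalizer_ne_zero hN n))]

end Existence

/-- over a ℚ-algebra there is a unique `R`-linear map
`λ₀ : R[X_1,…,X_N] → R` vanishing on every `M_{jk} p` and with `λ₀((X·X)^n) = 1`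
for all `n ≥ 0`. -/
theorem stmt14 {R : Type*} [CommRing R] [Algebra ℚ R] {N : ℕ} (hN : 2 ≤ N) :
    ∃! lam : MvPolynomial (Fin N) R →ₗ[R] R,
      (∀ (j k : Fin N), j ≠ k → ∀ p, lam (rot j k p) = 0) ∧
      (∀ n : ℕ, lam (XX R N ^ n) = 1) := by
  refine ⟨sphericalMean, ⟨fun j k _ => sphericalMean_rot j k, sphericalMean_XX_pow (by omega)⟩, ?_⟩
  rintro lam ⟨hlam, hXX⟩
  have hsub : IsRotationInvariant (lam - sphericalMean) :=
    IsRotationInvariant.sub hlam fun j k _ => sphericalMean_rot j k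
  refine sub_eq_zero.mp (hsub.eq_zero hN fun n => ?_)
  rw [LinearMap.sub_apply, hXX, sphericalMean_XX_pow (by omega), sub_self]
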